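/- arXiv:2605.06459 — 3 statements merged into one kernel-verified Lean document; each statement's English description precedes it below -/
import Mathlib

section
/- There exists a constant C > 0 such that for all 0 < x < 1 and all real s, |Log((1-x)/(1 - x e^{is})) - isx/(1-x) + s²x/(2(1-x)²)| ≤ C x |s|³ / (1-x)³, where Log denotes the principal branch of the complex logarithm. -/
/-!
Put `v = x / (1 - x)` and `z = v (1 - e^{is})`. Then `(1 - x) / (1 - x e^{is}) = (1 + z)⁻¹`
and `Re z = v (1 - cos s) ≥ 0`. On the half-plane `Re u ≥ 0` we have `‖1 + u‖ ≥ 1`, so the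
derivative `u² / (1 + u)` of the cubic remainder of `log (1 + u)` is at most `‖u‖²`, and that
remainder is at most `‖z‖³ ≤ v³ |s|³`. Expanding `z - z²/2` with the Taylor remainders of
`e^{is}`, which are bounded by `|s|ⁿ`, leaves an error of at most `(v + v² + v³) |s|³`. This is
below `v (1 + v)² |s|³ = x |s|³ / (1 - x)³`.
-/

open Complex Finset

lemma norm_le_abs_pow_succ_of_hasDerivAt {E : Type*} [NormedAddCommGroup E] [NormedSpace ℝ E]
    {f g : ℝ → E} {n : ℕ} {t : ℝ} (hf₀ : f 0 = 0)
    (hf : ∀ u ∈ Set.uIcc 0 t, HasDerivAt f (g u) u)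
    (hg : ∀ u ∈ Set.uIcc 0 t, ‖g u‖ ≤ |u| ^ n) :
    ‖f t‖ ≤ |t| ^ (n + 1) := by
  have hg' : ∀ u ∈ Set.uIcc 0 t, ‖g u‖ ≤ |t| ^ n := fun u hu =>
    (hg u hu).trans <| pow_le_pow_left₀ (abs_nonneg u)
      (by simpa using Set.abs_sub_left_of_mem_uIcc hu) n
  have := (convex_uIcc 0 t).norm_image_sub_le_of_norm_hasDerivWithin_le
    (fun u hu => (hf u hu).hasDerivWithinAt) hg' Set.left_mem_uIcc Set.right_mem_uIcc
  simpa [hf₀, pow_succ] using this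

lemma hasDerivAt_sum_ofReal_mul_I_pow_div_factorial (n : ℕ) (t : ℝ) :
    HasDerivAt (fun u : ℝ => ∑ k ∈ range (n + 1), ((u : ℂ) * I) ^ k / k.factorial)
      (I * ∑ k ∈ range n, ((t : ℂ) * I) ^ k / k.factorial) t := by
  induction n with
  | zero => simpa using hasDerivAt_const t (1 : ℂ)
  | succ n ih =>
    simp only [sum_range_succ _ (n + 1)]
    rw [sum_range_succ, mul_add]
    refine ih.add ?_
    refine ((((hasDerivAt_id t).ofReal_comp.mul_const I).pow (n + 1)).div_const
      ((n + 1).factorial : ℂ)).congr_deriv ?_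
    simp only [Nat.factorial_succ, Nat.cast_mul, Nat.cast_add, Nat.cast_one,
      add_tsub_cancel_right, id_eq, ofReal_one, one_mul]
    field_simp

lemma norm_exp_ofReal_mul_I_sub_sum_le (n : ℕ) (t : ℝ) :
    ‖exp (t * I) - ∑ k ∈ range n, ((t : ℂ) * I) ^ k / k.factorial‖ ≤ |t| ^ n := by
  induction n generalizing t with
  | zero => simp [norm_exp_ofReal_mul_I]
  | succ n ih =>
    refine norm_le_abs_pow_succ_of_hasDerivAt
      (f := fun u => exp (u * I) - ∑ k ∈ range (n + 1), ((u : ℂ) * I) ^ k / k.factorial)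
      (g := fun u => I * (exp (u * I) - ∑ k ∈ range n, ((u : ℂ) * I) ^ k / k.factorial))
      ?_ ?_ ?_
    · simp [sum_range_succ']
    · intro u _
      refine (((hasDerivAt_id u).ofReal_comp.mul_const I).cexp.sub
        (hasDerivAt_sum_ofReal_mul_I_pow_div_factorial n u)).congr_deriv ?_
      simp only [id_eq, ofReal_one, one_mul]
      ring
    · intro u _
      simpa using ih u

lemma norm_log_one_add_sub_logTaylor_le_of_re_nonneg (n : ℕ) {z : ℂ} (hz : 0 ≤ z.re) :
    ‖log (1 + z) - logTaylor (n + 1) z‖ ≤ ‖z‖ ^ (n + 1) := by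
  set S := {u : ℂ | 0 ≤ u.re} ∩ Metric.closedBall 0 ‖z‖
  have hS : ∀ u ∈ S, 1 + u ∈ slitPlane ∧ 1 ≤ ‖1 + u‖ := by
    rintro u ⟨hu : 0 ≤ u.re, -⟩
    exact ⟨Or.inl (by simp only [add_re, one_re]; linarith),
      (re_le_norm (1 + u)).trans' (by simp only [add_re, one_re]; linarith)⟩
  have hSconv : Convex ℝ S := (convex_halfSpace_re_ge 0).inter (convex_closedBall 0 ‖z‖)
  have := hSconv.norm_image_sub_le_of_norm_hasDerivWithin_le
    (f := fun u => log (1 + u) - logTaylor (n + 1) u) (C := ‖z‖ ^ n)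
    (fun u hu => (hasDerivAt_log_sub_logTaylor n (hS u hu).1).hasDerivWithinAt) ?_
    (x := 0) (y := z) ⟨(le_rfl : (0 : ℝ) ≤ (0 : ℂ).re), by simp⟩ ⟨hz, by simp⟩
  · simpa [logTaylor_at_zero, pow_succ] using this
  · intro u hu
    rw [norm_mul, norm_inv, norm_pow, norm_neg]
    calc ‖u‖ ^ n * ‖1 + u‖⁻¹ ≤ ‖u‖ ^ n * 1 := by
          gcongr; exact inv_le_one_of_one_le₀ (hS u hu).2
      _ ≤ ‖z‖ ^ n := by rw [mul_one]; gcongr; simpa using hu.2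

lemma norm_log_inv_one_add_mul_one_sub_exp_le {v : ℝ} (hv : 0 ≤ v) (s : ℝ) :
    ‖log (1 + v * (1 - exp (s * I)))⁻¹ - I * s * v + s ^ 2 * (v + v ^ 2) / 2‖
      ≤ v * (1 + v) ^ 2 * |s| ^ 3 := by
  set E := exp (s * I)
  set z : ℂ := v * (1 - E)
  have hz : 0 ≤ z.re := by
    simpa [z, E, exp_ofReal_mul_I_re] using mul_nonneg hv (sub_nonneg.2 (Real.cos_le_one s))
  have hR1 : ‖E - 1‖ ≤ |s| := by simpa using norm_exp_ofReal_mul_I_sub_sum_le 1 s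
  have hR2 : ‖E - 1 - s * I‖ ≤ |s| ^ 2 := by
    convert norm_exp_ofReal_mul_I_sub_sum_le 2 s using 2
    simp only [E, sum_range_succ, sum_range_zero, Nat.factorial, Nat.cast_succ]
    ring
  have hR3 : ‖E - 1 - s * I + s ^ 2 / 2‖ ≤ |s| ^ 3 := by
    convert norm_exp_ofReal_mul_I_sub_sum_le 3 s using 2
    simp only [E, sum_range_succ, sum_range_zero, Nat.factorial, Nat.cast_succ]
    linear_combination ((s : ℂ) ^ 2 / 2) * I_sq
  have hTaylor : logTaylor 3 z = z - z ^ 2 / 2 := by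
    simp only [logTaylor, sum_range_succ, sum_range_zero, Nat.cast_ofNat]
    ring
  have hdecomp : log (1 + z)⁻¹ - I * s * v + s ^ 2 * (v + v ^ 2) / 2
      = -(log (1 + z) - logTaylor 3 z)
        + (v * (E - 1 - s * I + s ^ 2 / 2) + v ^ 2 / 2 * (E - 1 - s * I) * (E - 1 + s * I)) := by
    rw [log_inv _ (slitPlane_arg_ne_pi (Or.inl (by simp only [add_re, one_re]; linarith))), hTaylor]
    linear_combination (v ^ 2 * s ^ 2 / 2) * I_sq
  have hz_norm : ‖z‖ ≤ v * |s| := by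
    rw [norm_mul, norm_real, Real.norm_of_nonneg hv, norm_sub_rev]; gcongr
  have hsum : ‖E - 1 + s * I‖ ≤ 2 * |s| := by
    calc ‖E - 1 + s * I‖ ≤ ‖E - 1‖ + ‖(s : ℂ) * I‖ := norm_add_le _ _
      _ ≤ 2 * |s| := by
        rw [norm_mul, norm_real, Real.norm_eq_abs, norm_I, mul_one]; linarith
  rw [hdecomp]
  calc _ ≤ ‖z‖ ^ 3 + (v * |s| ^ 3 + v ^ 2 / 2 * |s| ^ 2 * (2 * |s|)) := by
        refine (norm_add_le _ _).trans <|
          add_le_add ?_ ((norm_add_le _ _).trans (add_le_add ?_ ?_))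
        · rw [norm_neg]; exact norm_log_one_add_sub_logTaylor_le_of_re_nonneg 2 hz
        · rw [norm_mul, norm_real, Real.norm_of_nonneg hv]; gcongr
        · rw [norm_mul, norm_mul, norm_div, norm_pow, norm_real, Real.norm_of_nonneg hv,
            Complex.norm_two]
          gcongr
    _ ≤ (v * |s|) ^ 3 + (v * |s| ^ 3 + v ^ 2 / 2 * |s| ^ 2 * (2 * |s|)) := by gcongr
    _ ≤ v * (1 + v) ^ 2 * |s| ^ 3 := by
      have : 0 ≤ v ^ 2 * |s| ^ 3 := by positivity
      linarith

/-- There is a constant `C > 0` such that for `0 < x < 1` and real `s`,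
`|Log((1-x)/(1-xe^{is})) - isx/(1-x) + s²x/(2(1-x)²)| ≤ C x |s|³/(1-x)³`. -/
theorem log_ratio_taylor_bound :
    ∃ C > (0 : ℝ), ∀ x : ℝ, 0 < x → x < 1 → ∀ s : ℝ,
      ‖Complex.log ((1 - (x : ℂ)) / (1 - (x : ℂ) * Complex.exp ((s : ℂ) * Complex.I)))
          - Complex.I * (s : ℂ) * (x : ℂ) / (1 - (x : ℂ))
          + (s : ℂ) ^ 2 * (x : ℂ) / (2 * (1 - (x : ℂ)) ^ 2)‖
        ≤ C * x * |s| ^ 3 / (1 - x) ^ 3 := by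
  refine ⟨1, one_pos, fun x hx₀ hx₁ s => ?_⟩
  have hx : 0 < 1 - x := sub_pos.2 hx₁
  have hx' : (1 : ℂ) - x ≠ 0 := by exact_mod_cast hx.ne'
  set v := x / (1 - x)
  have hratio : (1 - (x : ℂ)) / (1 - x * exp (s * I)) = (1 + v * (1 - exp (s * I)))⁻¹ := by
    rw [← inv_div, inv_inj]
    push_cast [v]; field_simp; ring
  have hlin : I * s * x / (1 - x) = I * s * (v : ℂ) := by push_cast [v]; ring
  have hquad : (s : ℂ) ^ 2 * x / (2 * (1 - x) ^ 2) = s ^ 2 * (v + v ^ 2) / 2 := by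
    push_cast [v]; field_simp; ring
  have hbound : 1 * x * |s| ^ 3 / (1 - x) ^ 3 = v * (1 + v) ^ 2 * |s| ^ 3 := by
    simp only [v]; field_simp; ring
  rw [hratio, hlin, hquad, hbound]
  exact norm_log_inv_one_add_mul_one_sub_exp_le (div_nonneg hx₀.le hx.le) s
end

section
/- Let B = √6/π. Uniformly in v ≥ -log(n)/8, as n → ∞, the product over odd integers 2k-1 > B√n (v + log(B√n)) of (1 - e^{-(2k-1)/(B√n)}) converges to e^{-(1/2) e^{-v}}. Precisely: for every ε > 0 there is N such that for all n ≥ N and all v ≥ -log(n)/8, the ratio of the product to e^{-(1/2)e^{-v}} lies in (1-ε, 1+ε). -/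
/-!
Write `s = B√n` and `y = v + log s`. The factors of the product are `1 - x_k` where the `x_k`
form the tail `e^{-(2k+1)/s}`, `2k + 1 > s y`, of a geometric series of ratio `e^{-2/s}`; every
term is at most `A = e^{-y} = e^{-v}/s` and the tail sums to `A s/2 + O(A) = e^{-v}/2 + O(A)`.
Since `log (1 - x) = -x + O(x²)`, the logarithm of the product is `-∑ x_k + O(A ∑ x_k)`, so the
logarithm of the ratio is `O(A + A² s)`; for `v ≥ -log n / 8` both terms are `O(n^{-1/4})`.
-/

open Real Filter Topology

lemma abs_log_one_sub_add_le {x : ℝ} (hx : |x| ≤ 1 / 2) : |log (1 - x) + x| ≤ 2 * x ^ 2 := by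
  have h := abs_log_sub_add_sum_range_le (hx.trans_lt (by norm_num)) 1
  simp only [Finset.sum_range_one, pow_one, CharP.cast_eq_zero, zero_add, div_one] at h
  calc |log (1 - x) + x| = |x + log (1 - x)| := by rw [add_comm]
    _ ≤ |x| ^ 2 / (1 - |x|) := h
    _ ≤ 2 * x ^ 2 := by
      rw [div_le_iff₀ (by linarith), sq_abs]
      nlinarith [sq_nonneg x]

lemma exists_tprod_one_sub_eq_exp {x : ℕ → ℝ} {M : ℝ} (hx : Summable x) (h0 : ∀ k, 0 ≤ x k)
    (hM : ∀ k, x k ≤ M) (hM2 : M ≤ 1 / 2) :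
    ∃ L, ∏' k, (1 - x k) = exp L ∧ |L + ∑' k, x k| ≤ 2 * M * ∑' k, x k := by
  have hlog : ∀ k, ‖log (1 - x k) + x k‖ ≤ 2 * M * x k := fun k =>
    (abs_log_one_sub_add_le (abs_le.2 ⟨by linarith [h0 k], (hM k).trans hM2⟩)).trans
      (by nlinarith [h0 k, hM k])
  have hL : Summable fun k => log (1 - x k) := by
    simpa using (hx.mul_left (2 * M)).of_norm_bounded hlog |>.sub hx
  refine ⟨∑' k, log (1 - x k), ?_, ?_⟩
  · rw [← hL.hasSum.rexp.tprod_eq]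
    exact tprod_congr fun k => (exp_log (by linarith [hM k])).symm
  · rw [← hL.tsum_add hx, ← tsum_mul_left]
    exact tsum_of_norm_bounded (hx.mul_left (2 * M)).hasSum hlog

lemma exists_nat_threshold {a b y : ℝ} (ha : 0 < a) (hy : b ≤ y + a) :
    ∃ m : ℕ, (∀ k : ℕ, y < a * k + b ↔ m ≤ k) ∧ a * m + b ≤ y + a := by
  set r := (y - b) / a
  refine ⟨(⌊r⌋ + 1).toNat, fun k => ?_, ?_⟩
  · rw [Int.toNat_le, Int.add_one_le_iff, Int.floor_lt, Int.cast_natCast, div_lt_iff₀ ha]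
    constructor <;> intro h <;> linarith
  · have hr : -1 ≤ r := by rw [le_div_iff₀ ha]; linarith
    have hm : ((⌊r⌋ + 1).toNat : ℝ) ≤ r + 1 := by
      rcases le_or_gt 0 (⌊r⌋ + 1) with h | h
      · rw [← Int.cast_natCast, Int.toNat_of_nonneg h]
        push_cast
        linarith [Int.floor_le r]
      · rw [Int.toNat_of_nonpos h.le]
        push_cast
        linarith
    have har : a * r = y - b := mul_div_cancel₀ _ ha.ne'
    linarith [mul_le_mul_of_nonneg_left hm ha.le]

lemma hasSum_exp_neg_affine_tail {a : ℝ} (ha : 0 < a) (b : ℝ) (m : ℕ) :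
    HasSum (fun k : ℕ => if m ≤ k then exp (-(a * k + b)) else 0)
      (exp (-(a * m + b)) * (1 - exp (-a))⁻¹) := by
  rw [← hasSum_nat_add_iff' m]
  have hzero : ∑ i ∈ Finset.range m, (if m ≤ i then exp (-(a * i + b)) else 0) = 0 :=
    Finset.sum_eq_zero fun i hi => if_neg (by simpa using hi)
  have hshift : (fun k : ℕ => if m ≤ k + m then exp (-(a * ↑(k + m) + b)) else 0) =
      fun k => exp (-(a * m + b)) * exp (-a) ^ k := by
    funext k
    rw [if_pos (Nat.le_add_left m k), ← exp_nat_mul, ← exp_add]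
    push_cast
    ring_nf
  rw [hzero, sub_zero, hshift]
  exact (hasSum_geometric_of_lt_one (exp_pos _).le (exp_lt_one_iff.2 (neg_lt_zero.2 ha))).mul_left _

lemma one_div_le_inv_one_sub_exp_neg {a : ℝ} (ha : 0 < a) : 1 / a ≤ (1 - exp (-a))⁻¹ := by
  rw [one_div]
  exact inv_anti₀ (by linarith [exp_lt_one_iff.2 (neg_lt_zero.2 ha)])
    (by linarith [add_one_le_exp (-a)])

lemma inv_one_sub_exp_neg_le {a : ℝ} (ha : 0 < a) : (1 - exp (-a))⁻¹ ≤ 1 / a + 1 := by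
  have hpos : 0 < 1 - exp (-a) := by linarith [exp_lt_one_iff.2 (neg_lt_zero.2 ha)]
  rw [inv_le_iff_one_le_mul₀ hpos, exp_neg]
  have h := add_one_le_exp a
  have he := exp_pos a
  field_simp
  nlinarith

noncomputable def expTail (a b y : ℝ) (k : ℕ) : ℝ :=
  if y < a * k + b then exp (-(a * k + b)) else 0

lemma expTail_nonneg (a b y : ℝ) (k : ℕ) : 0 ≤ expTail a b y k := by
  unfold expTail; split_ifs <;> positivity

lemma expTail_le_exp_neg (a b y : ℝ) (k : ℕ) : expTail a b y k ≤ exp (-y) := by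
  unfold expTail
  split_ifs with h
  · exact exp_le_exp.2 (by linarith)
  · positivity

lemma summable_expTail_and_abs_tsum_sub_le {a b y : ℝ} (ha : 0 < a) (hy : b ≤ y + a) :
    Summable (expTail a b y) ∧ |∑' k, expTail a b y k - exp (-y) / a| ≤ exp (-y) := by
  obtain ⟨m, hm, hma⟩ := exists_nat_threshold ha hy
  have hsum : HasSum (expTail a b y) (exp (-(a * m + b)) * (1 - exp (-a))⁻¹) := by
    convert hasSum_exp_neg_affine_tail ha b m using 2 with k
    simp only [expTail, hm]
  refine ⟨hsum.summable, ?_⟩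
  have hfirst_le : exp (-(a * m + b)) ≤ exp (-y) := exp_le_exp.2 (by linarith [(hm m).2 le_rfl])
  have hfirst_ge : exp (-y) * (1 - a) ≤ exp (-(a * m + b)) :=
    calc exp (-y) * (1 - a) ≤ exp (-y) * exp (-a) :=
          mul_le_mul_of_nonneg_left (by linarith [add_one_le_exp (-a)]) (exp_pos _).le
      _ = exp (-(y + a)) := by rw [← exp_add, neg_add]
      _ ≤ exp (-(a * m + b)) := exp_le_exp.2 (by linarith)
  have hq_ge := one_div_le_inv_one_sub_exp_neg ha
  have hlower : exp (-y) / a - exp (-y) ≤ exp (-(a * m + b)) * (1 - exp (-a))⁻¹ :=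
    calc exp (-y) / a - exp (-y) = exp (-y) * (1 - a) * (1 / a) := by field_simp
      _ ≤ exp (-(a * m + b)) * (1 / a) := by gcongr
      _ ≤ _ := mul_le_mul_of_nonneg_left hq_ge (exp_pos _).le
  have hupper : exp (-(a * m + b)) * (1 - exp (-a))⁻¹ ≤ exp (-y) / a + exp (-y) :=
    calc exp (-(a * m + b)) * (1 - exp (-a))⁻¹ ≤ exp (-y) * (1 / a + 1) :=
          mul_le_mul hfirst_le (inv_one_sub_exp_neg_le ha) (hq_ge.trans' (by positivity))
            (exp_pos _).le
      _ = exp (-y) / a + exp (-y) := by ring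
  rw [hsum.tsum_eq, abs_le]
  constructor <;> linarith

lemma odd_factor_eq_one_sub_expTail {s : ℝ} (hs : 0 < s) (y : ℝ) (k : ℕ) :
    (if s * y < 2 * (k : ℝ) + 1 then 1 - exp (-(2 * (k : ℝ) + 1) / s) else 1) =
      1 - expTail (2 / s) (1 / s) y k := by
  have hiff : s * y < 2 * (k : ℝ) + 1 ↔ y < 2 / s * k + 1 / s := by
    rw [show 2 / s * (k : ℝ) + 1 / s = (2 * k + 1) / s by ring, lt_div_iff₀ hs, mul_comm]
  rw [expTail, if_congr hiff rfl rfl,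
    show -(2 * (k : ℝ) + 1) / s = -(2 / s * k + 1 / s) by ring]
  split_ifs <;> ring

lemma exists_tprod_odd_tail_div_eq_exp {s v : ℝ} (hs : 0 < s) (hA : exp (-v) / s ≤ 1 / 2) :
    ∃ t, (∏' k : ℕ, if s * (v + log s) < 2 * (k : ℝ) + 1 then
        1 - exp (-(2 * (k : ℝ) + 1) / s) else 1) / exp (-(1 / 2) * exp (-v)) = exp t ∧
      |t| ≤ 2 * (exp (-v) / s) + (exp (-v) / s) ^ 2 * s := by
  set y := v + log s
  have hAy : exp (-y) = exp (-v) / s := by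
    rw [neg_add, exp_add, exp_neg (log s), exp_log hs, div_eq_mul_inv]
  set A := exp (-v) / s
  have hA0 : 0 ≤ A := by positivity
  have hAs : A * s = exp (-v) := div_mul_cancel₀ _ hs.ne'
  have hy : 0 < y := by
    have : exp (-y) < 1 := by linarith
    linarith [exp_lt_one_iff.1 this]
  obtain ⟨hsum, hS⟩ := summable_expTail_and_abs_tsum_sub_le (b := 1 / s) (y := y)
    (by positivity : 0 < 2 / s)
    (by linarith [div_le_div_of_nonneg_right (by norm_num : (1 : ℝ) ≤ 2) hs.le])
  obtain ⟨L, hP, hL⟩ := exists_tprod_one_sub_eq_exp hsum (expTail_nonneg _ _ _)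
    (expTail_le_exp_neg _ _ _) (hAy ▸ hA)
  set S := ∑' k, expTail (2 / s) (1 / s) y k
  rw [hAy, show A / (2 / s) = exp (-v) / 2 by rw [← hAs]; field_simp] at hS
  rw [hAy] at hL
  have hS_le : S ≤ A * s / 2 + A := by linarith [(abs_le.1 hS).2]
  refine ⟨L + exp (-v) / 2, ?_, ?_⟩
  · rw [tprod_congr (odd_factor_eq_one_sub_expTail hs y), hP, ← exp_sub]
    ring_nf
  · calc |L + exp (-v) / 2| = |(L + S) - (S - exp (-v) / 2)| := by ring_nf
      _ ≤ |L + S| + |S - exp (-v) / 2| := abs_sub _ _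
      _ ≤ 2 * A * (A * s / 2 + A) + A := add_le_add (hL.trans (by gcongr)) hS
      _ ≤ 2 * A + A ^ 2 * s := by nlinarith

lemma error_le_of_neg_log_div_eight_le {B x v : ℝ} (hB : 0 < B) (hx : 1 ≤ x)
    (hv : -log x / 8 ≤ v) :
    2 * (exp (-v) / (B * √x)) + (exp (-v) / (B * √x)) ^ 2 * (B * √x) ≤
      3 * (exp (-log x / 4) / B) := by
  have hsqrt : √x = exp (log x / 2) := by rw [exp_half, exp_log (by linarith)]
  have hlog := log_nonneg hx
  have hfirst : exp (-v) / (B * √x) = exp (-v - log x / 2) / B := by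
    rw [hsqrt, exp_sub]; field_simp
  have hsecond : (exp (-v) / (B * √x)) ^ 2 * (B * √x) = exp (-2 * v - log x / 2) / B := by
    rw [hsqrt, exp_sub, show -2 * v = -v + -v by ring, exp_add]; field_simp
  have h1 : exp (-v - log x / 2) / B ≤ exp (-log x / 4) / B := by
    gcongr; linarith
  have h2 : exp (-2 * v - log x / 2) / B ≤ exp (-log x / 4) / B := by
    gcongr; linarith
  rw [hsecond, hfirst]
  linarith

/-- Uniformly in `v ≥ -log(n)/8`, as `n → ∞`,
`∏_{2k-1 > B√n(v + log(B√n))} (1 - e^{-(2k-1)/(B√n)}) ∼ e^{-(1/2)e^{-v}}`,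
where `B = √6/π`; here `2k-1` runs over odd positive integers, written `2k+1`, `k : ℕ`. -/
theorem prod_large_parts_asymptotic :
    ∀ ε > (0 : ℝ), ∃ N : ℕ, ∀ n : ℕ, N ≤ n → ∀ v : ℝ, -Real.log n / 8 ≤ v →
      (∏' k : ℕ,
          if (Real.sqrt 6 / π) * Real.sqrt n * (v + Real.log ((Real.sqrt 6 / π) * Real.sqrt n))
              < 2 * (k : ℝ) + 1 then
            1 - Real.exp (-(2 * (k : ℝ) + 1) / ((Real.sqrt 6 / π) * Real.sqrt n))
          else 1)
        / Real.exp (-(1/2) * Real.exp (-v)) ∈ Set.Ioo (1 - ε) (1 + ε) := by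
  intro ε hε
  set B := √6 / π
  have hB : 0 < B := by positivity
  have hlim : Tendsto (fun n : ℕ => 3 * (exp (-log n / 4) / B)) atTop (𝓝 0) := by
    have := ((tendsto_exp_atBot.comp ((tendsto_neg_atTop_atBot.comp
      (tendsto_log_atTop.comp tendsto_natCast_atTop_atTop)).atBot_div_const
        (by norm_num : (0 : ℝ) < 4))).div_const B).const_mul 3
    simpa [neg_div] using this
  obtain ⟨N, hN⟩ := eventually_atTop.1 ((hlim.eventually (gt_mem_nhds
    (lt_min one_pos (half_pos hε)))).and (eventually_ge_atTop 1))
  refine ⟨N, fun n hn v hv => ?_⟩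
  obtain ⟨hsmall, hn1⟩ := hN n hn
  have herr := error_le_of_neg_log_div_eight_le hB (by exact_mod_cast hn1) hv
  have hs : 0 < B * √n := by positivity
  have hsq : 0 ≤ (exp (-v) / (B * √n)) ^ 2 * (B * √n) := by positivity
  obtain ⟨t, heq, ht⟩ := exists_tprod_odd_tail_div_eq_exp hs (v := v) (by
    linarith [min_le_left 1 (ε / 2)])
  have ht1 : |t| ≤ 1 := by linarith [min_le_left 1 (ε / 2)]
  have hclose : |exp t - 1| < ε :=
    (abs_exp_sub_one_le ht1).trans_lt (by linarith [min_le_right 1 (ε / 2)])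
  rw [heq, Set.mem_Ioo]
  constructor <;> linarith [abs_lt.1 hclose]
end

section
/- Let B = √6/π. Then lim_{n→∞} (1/√n) ∑_{k≥1} -log(1 - e^{-(2k-1)/(B√n)}) = B · ∫_0^∞ -log(1 - e^{-u}) du / 2 = B π²/12. -/
open Real Filter

noncomputable def Faux (m : ℕ) (t : ℝ) : ℝ := t / (2 * ((m : ℝ) + 1) * Real.sinh (((m : ℝ) + 1) * t))

lemma sinh_slope : Tendsto (fun x : ℝ => x / Real.sinh x) (nhdsWithin 0 {0}ᶜ) (nhds 1) := by
  have h : HasDerivAt Real.sinh 1 0 := by simpa using Real.hasDerivAt_sinh 0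
  have h2 := hasDerivAt_iff_tendsto_slope.mp h
  have h3 : Tendsto (fun x : ℝ => Real.sinh x / x) (nhdsWithin 0 {0}ᶜ) (nhds 1) := by
    refine h2.congr fun x => ?_
    simp [slope_fun_def, Real.sinh_zero, div_eq_inv_mul]
  have := h3.inv₀ one_ne_zero
  simpa [inv_div] using this

lemma Faux_tendsto (m : ℕ) :
    Tendsto (Faux m) (nhdsWithin 0 (Set.Ioi 0)) (nhds (1 / (2 * ((m : ℝ) + 1) ^ 2))) := by
  set a : ℝ := (m : ℝ) + 1 with ha
  have hapos : 0 < a := by positivity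
  have hmap : Tendsto (fun t : ℝ => a * t) (nhdsWithin 0 (Set.Ioi 0)) (nhdsWithin 0 {0}ᶜ) := by
    apply tendsto_nhdsWithin_of_tendsto_nhds_of_eventually_within
    · have h0 : Tendsto (fun t : ℝ => a * t) (nhds 0) (nhds (a * 0)) :=
        (continuous_const.mul continuous_id).tendsto 0
      rw [mul_zero] at h0
      exact h0.mono_left nhdsWithin_le_nhds
    · filter_upwards [self_mem_nhdsWithin] with t ht
      exact (mul_pos hapos ht).ne'
  have h1 : Tendsto (fun t : ℝ => (a * t) / Real.sinh (a * t))
      (nhdsWithin 0 (Set.Ioi 0)) (nhds 1) := sinh_slope.comp hmap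
  have h2 := h1.const_mul (1 / (2 * a ^ 2))
  rw [mul_one] at h2
  refine h2.congr' ?_
  filter_upwards [self_mem_nhdsWithin] with t ht
  have hs : Real.sinh (a * t) ≠ 0 := by
    have : 0 < Real.sinh (a * t) := by
      rw [Real.sinh_pos_iff]; exact mul_pos hapos ht
    exact this.ne'
  simp only [Faux, ← ha]
  field_simp

lemma Faux_bound (m : ℕ) {t : ℝ} (ht : 0 < t) :
    ‖Faux m t‖ ≤ 1 / (2 * ((m : ℝ) + 1) ^ 2) := by
  set a : ℝ := (m : ℝ) + 1 with ha
  have hapos : 0 < a := by positivity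
  have hsinh : a * t ≤ Real.sinh (a * t) := Real.self_le_sinh_iff.mpr (mul_pos hapos ht).le
  have hspos : 0 < Real.sinh (a * t) := lt_of_lt_of_le (mul_pos hapos ht) hsinh
  have h0 : 0 ≤ Faux m t := by
    apply div_nonneg ht.le
    positivity
  rw [Real.norm_eq_abs, abs_of_nonneg h0]
  rw [Faux, ← ha]
  rw [div_le_div_iff₀ (by positivity) (by positivity)]
  calc t * (2 * a ^ 2) = (a * t) * (2 * a) := by ring
    _ ≤ Real.sinh (a * t) * (2 * a) := by
        apply mul_le_mul_of_nonneg_right hsinh (by positivity)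
    _ = 1 * (2 * a * Real.sinh (a * t)) := by ring

lemma bound_hasSum : HasSum (fun m : ℕ => 1 / (2 * ((m : ℝ) + 1) ^ 2)) (π ^ 2 / 12) := by
  have h := hasSum_zeta_two
  have hz : HasSum (fun n : ℕ => (1 : ℝ) / (n : ℝ) ^ 2)
      (π ^ 2 / 6 + ∑ i ∈ Finset.range 1, (1 : ℝ) / (i : ℝ) ^ 2) := by simpa using h
  have h1' := (hasSum_nat_add_iff (f := fun n : ℕ => (1 : ℝ) / (n : ℝ) ^ 2) 1).mpr hz
  have h1 : HasSum (fun n : ℕ => (1 : ℝ) / ((n : ℝ) + 1) ^ 2) (π ^ 2 / 6) := by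
    convert h1' using 2 with n
    · rfl
    simp
  have h2 := h1.div_const 2
  have heq : (fun m : ℕ => 1 / (2 * ((m : ℝ) + 1) ^ 2)) =
      (fun i : ℕ => 1 / ((i : ℝ) + 1) ^ 2 / 2) := by
    funext m; rw [div_div, mul_comm]
  rw [heq, show (π ^ 2 / 12 : ℝ) = π ^ 2 / 6 / 2 by ring]
  exact h2

lemma swap_sum {t : ℝ} (ht : 0 < t) :
    t * ∑' k : ℕ, -Real.log (1 - Real.exp (-(2 * (k : ℝ) + 1) * t)) = ∑' m : ℕ, Faux m t := by
  set r : ℝ := Real.exp (-t) with hr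
  have hr0 : 0 < r := Real.exp_pos _
  have hr1 : r < 1 := Real.exp_lt_one_iff.mpr (by linarith)
  -- the double sum terms
  set term : ℕ → ℕ → ℝ := fun k m =>
    Real.exp (-(2 * (k : ℝ) + 1) * t) ^ (m + 1) / ((m : ℝ) + 1) with hterm
  -- per-k expansion of -log
  have hA : ∀ k : ℕ, HasSum (fun m => term k m)
      (-Real.log (1 - Real.exp (-(2 * (k : ℝ) + 1) * t))) := by
    intro k
    have hxpos : 0 < Real.exp (-(2 * (k : ℝ) + 1) * t) := Real.exp_pos _
    have hxlt : Real.exp (-(2 * (k : ℝ) + 1) * t) < 1 := by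
      apply Real.exp_lt_one_iff.mpr
      have hk : (0 : ℝ) ≤ (k : ℝ) := Nat.cast_nonneg k
      nlinarith
    have habs : |Real.exp (-(2 * (k : ℝ) + 1) * t)| < 1 := by
      rw [abs_of_pos hxpos]; exact hxlt
    exact Real.hasSum_pow_div_log_of_abs_lt_one habs
  -- summability of the (flipped) double sum
  have hSmm : Summable (Function.uncurry fun m k => term k m) := by
    have hgeo : Summable (fun n : ℕ => r ^ n) := summable_geometric_of_lt_one hr0.le hr1
    have hprod : Summable (fun p : ℕ × ℕ => r ^ p.1 * r ^ p.2) :=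
      hgeo.mul_of_nonneg hgeo (fun n => pow_nonneg hr0.le n) (fun n => pow_nonneg hr0.le n)
    apply Summable.of_nonneg_of_le _ _ hprod
    · rintro ⟨m, k⟩
      have : 0 < Real.exp (-(2 * (k : ℝ) + 1) * t) := Real.exp_pos _
      exact div_nonneg (pow_nonneg this.le _) (by positivity)
    · rintro ⟨m, k⟩
      show term k m ≤ r ^ m * r ^ k
      have h1 : Real.exp (-(2 * (k : ℝ) + 1) * t) ^ (m + 1) ≤ r ^ m * r ^ k := by
        rw [← Real.exp_nat_mul, ← Real.exp_nat_mul, ← Real.exp_nat_mul, ← Real.exp_add]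
        apply Real.exp_le_exp.mpr
        have hk : (0 : ℝ) ≤ (k : ℝ) := Nat.cast_nonneg k
        have hm : (0 : ℝ) ≤ (m : ℝ) := Nat.cast_nonneg m
        push_cast
        nlinarith [mul_nonneg (mul_nonneg hk hm) ht.le, mul_nonneg hk ht.le,
          mul_nonneg hm ht.le, ht.le]
      calc term k m ≤ Real.exp (-(2 * (k : ℝ) + 1) * t) ^ (m + 1) := by
            rw [hterm]
            apply div_le_self (pow_nonneg (Real.exp_pos _).le _)
            have : (0 : ℝ) ≤ (m : ℝ) := Nat.cast_nonneg m
            linarith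
        _ ≤ r ^ m * r ^ k := h1
  -- swap
  have hswap : ∑' k, ∑' m, term k m = ∑' m, ∑' k, term k m := Summable.tsum_comm hSmm
  -- inner geometric sum for fixed m
  have hD : ∀ m : ℕ, HasSum (fun k => term k m)
      (Real.exp (-(((m : ℝ) + 1) * t)) / ((m : ℝ) + 1) *
        (1 - Real.exp (-(2 * ((m : ℝ) + 1) * t)))⁻¹) := by
    intro m
    set a : ℝ := (m : ℝ) + 1 with ha
    have hapos : 0 < a := by positivity
    have hq0 : (0 : ℝ) ≤ Real.exp (-(2 * a * t)) := (Real.exp_pos _).le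
    have hq1 : Real.exp (-(2 * a * t)) < 1 :=
      Real.exp_lt_one_iff.mpr (by nlinarith)
    have hgeo := (hasSum_geometric_of_lt_one hq0 hq1).mul_left (Real.exp (-(a * t)) / a)
    have heq : (fun k : ℕ => Real.exp (-(a * t)) / a * Real.exp (-(2 * a * t)) ^ k) =
        fun k : ℕ => term k m := by
      funext k
      rw [hterm]
      simp only [← ha]
      rw [div_mul_eq_mul_div]
      congr 1
      rw [← Real.exp_nat_mul, ← Real.exp_nat_mul, ← Real.exp_add]
      congr 1
      push_cast
      ring
    rwa [heq] at hgeo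
  -- put it together
  calc t * ∑' k : ℕ, -Real.log (1 - Real.exp (-(2 * (k : ℝ) + 1) * t))
      = t * ∑' k, ∑' m, term k m := by
        congr 1
        exact tsum_congr fun k => ((hA k).tsum_eq).symm
    _ = t * ∑' m, ∑' k, term k m := by rw [hswap]
    _ = t * ∑' m : ℕ, (Real.exp (-(((m : ℝ) + 1) * t)) / ((m : ℝ) + 1) *
          (1 - Real.exp (-(2 * ((m : ℝ) + 1) * t)))⁻¹) := by
        congr 1
        exact tsum_congr fun m => (hD m).tsum_eq
    _ = ∑' m : ℕ, t * (Real.exp (-(((m : ℝ) + 1) * t)) / ((m : ℝ) + 1) *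
          (1 - Real.exp (-(2 * ((m : ℝ) + 1) * t)))⁻¹) := tsum_mul_left.symm
    _ = ∑' m : ℕ, Faux m t := by
        apply tsum_congr
        intro m
        set a : ℝ := (m : ℝ) + 1 with ha
        have hapos : 0 < a := by positivity
        have hspos : 0 < Real.sinh (a * t) := by
          rw [Real.sinh_pos_iff]; exact mul_pos hapos ht
        have hkey : 1 - Real.exp (-(2 * a * t)) =
            Real.exp (-(a * t)) * (2 * Real.sinh (a * t)) := by
          rw [Real.sinh_eq]
          have e1 : Real.exp (-(a * t)) * Real.exp (a * t) = 1 := by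
            rw [← Real.exp_add]; simp
          have e2 : Real.exp (-(a * t)) * Real.exp (-(a * t)) =
              Real.exp (-(2 * a * t)) := by
            rw [← Real.exp_add]; congr 1; ring
          nlinarith [e1, e2]
        rw [Faux, ← ha, hkey]
        have h1 : Real.exp (-(a * t)) ≠ 0 := (Real.exp_pos _).ne'
        field_simp


lemma sum_Faux_tendsto :
    Tendsto (fun t : ℝ => ∑' m : ℕ, Faux m t) (nhdsWithin 0 (Set.Ioi 0))
      (nhds (π ^ 2 / 12)) := by
  rw [← bound_hasSum.tsum_eq]
  apply tendsto_tsum_of_dominated_convergence bound_hasSum.summable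
  · exact fun m => Faux_tendsto m
  · filter_upwards [self_mem_nhdsWithin] with t ht m
    exact Faux_bound m ht

/-- With `B = √6/π`,
`lim_{n→∞} (1/√n) ∑_{k≥1} -log(1 - e^{-(2k-1)/(B√n)}) = B π²/12`
(`2k-1` over positive `k` is written `2k+1` over `k : ℕ`). -/
theorem sum_log_asymptotic :
    Filter.Tendsto
      (fun n : ℕ => (1 / Real.sqrt n) *
        ∑' k : ℕ, -Real.log (1 - Real.exp (-(2 * (k : ℝ) + 1) /
          ((Real.sqrt 6 / π) * Real.sqrt n))))
      Filter.atTop (nhds ((Real.sqrt 6 / π) * π ^ 2 / 12)) := by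
  have hB : (0 : ℝ) < Real.sqrt 6 / π :=
    div_pos (Real.sqrt_pos.mpr (by norm_num)) Real.pi_pos
  have hs : Tendsto Real.sqrt atTop atTop := by
    apply (tendsto_rpow_atTop (by norm_num : (0:ℝ) < 1/2)).congr'
    filter_upwards [eventually_ge_atTop (0:ℝ)] with x hx
    rw [Real.sqrt_eq_rpow]
  have hc : Tendsto (fun n : ℕ => 1 / ((Real.sqrt 6 / π) * Real.sqrt n)) atTop
      (nhdsWithin 0 (Set.Ioi 0)) := by
    apply tendsto_nhdsWithin_of_tendsto_nhds_of_eventually_within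
    · have h1 : Tendsto (fun n : ℕ => Real.sqrt n) atTop atTop :=
        hs.comp tendsto_natCast_atTop_atTop
      have h2 : Tendsto (fun n : ℕ => (Real.sqrt 6 / π) * Real.sqrt n) atTop atTop :=
        h1.const_mul_atTop hB
      have h3 := h2.inv_tendsto_atTop
      refine h3.congr fun n => ?_
      simp [one_div]
    · filter_upwards [eventually_ge_atTop 1] with n hn
      have hn' : (0 : ℝ) < (n : ℝ) := by exact_mod_cast Nat.lt_of_lt_of_le Nat.zero_lt_one hn
      have hsn : (0 : ℝ) < Real.sqrt n := Real.sqrt_pos.mpr hn'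
      exact one_div_pos.mpr (mul_pos hB hsn)
  have h := (sum_Faux_tendsto.comp hc).const_mul (Real.sqrt 6 / π)
  rw [show (Real.sqrt 6 / π) * (π ^ 2 / 12) = Real.sqrt 6 / π * π ^ 2 / 12 by ring] at h
  apply Filter.Tendsto.congr' _ h
  filter_upwards [eventually_ge_atTop 1] with n hn
  have hn' : (0 : ℝ) < (n : ℝ) := by exact_mod_cast Nat.lt_of_lt_of_le Nat.zero_lt_one hn
  have hsn : (0 : ℝ) < Real.sqrt n := Real.sqrt_pos.mpr hn'
  have hcpos : 0 < (Real.sqrt 6 / π) * Real.sqrt n := mul_pos hB hsn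
  have htpos : 0 < 1 / ((Real.sqrt 6 / π) * Real.sqrt n) := one_div_pos.mpr hcpos
  show (Real.sqrt 6 / π) *
      ∑' m : ℕ, Faux m (1 / ((Real.sqrt 6 / π) * Real.sqrt n)) = _
  rw [← swap_sum htpos, ← mul_assoc]
  congr 1
  · field_simp
  · exact tsum_congr fun k => by rw [mul_one_div]
end
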